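/- Let Φ be a unital quantum channel on M_n. Then every element of Φ^C(M(Φ)) commutes with every element of Φ^C(M(Φ^C)), where M(·) denotes multiplicative domain. -/

import Mathlib

open Matrix ComplexOrder

/-- The completely positive map with Kraus operators `V i`. -/
noncomputable def krausMap {d n m : ℕ} (V : Fin d → Matrix (Fin m) (Fin n) ℂ) :
    Matrix (Fin n) (Fin n) ℂ →ₗ[ℂ] Matrix (Fin m) (Fin m) ℂ where
  toFun X := ∑ i, V i * X * (V i)ᴴ
  map_add' X Y := by simp [Matrix.mul_add, Matrix.add_mul, Finset.sum_add_distrib]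
  map_smul' c X := by simp [Matrix.mul_smul, Matrix.smul_mul, Finset.smul_sum]

/-- The complementary map `Φ^C(ρ) = ∑_{i,j} tr(ρ V_j* V_i) E_{ij}`. -/
noncomputable def complMap {d n m : ℕ} (V : Fin d → Matrix (Fin m) (Fin n) ℂ) :
    Matrix (Fin n) (Fin n) ℂ →ₗ[ℂ] Matrix (Fin d) (Fin d) ℂ where
  toFun X := Matrix.of fun i j => (X * ((V j)ᴴ * V i)).trace
  map_add' X Y := by
    ext i j
    simp [Matrix.add_mul]
  map_smul' c X := by
    ext i j
    simp [Matrix.smul_mul]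

/-- The compression map `P_Q(X) = Q X Q`. -/
noncomputable def comprMap {n : ℕ} (Q : Matrix (Fin n) (Fin n) ℂ) :
    Matrix (Fin n) (Fin n) ℂ →ₗ[ℂ] Matrix (Fin n) (Fin n) ℂ where
  toFun X := Q * X * Q
  map_add' X Y := by simp [Matrix.mul_add, Matrix.add_mul]
  map_smul' c X := by simp [Matrix.mul_smul, Matrix.smul_mul]

/-- The orthogonal complement of a set of matrices with respect to the trace
(Hilbert–Schmidt) inner product `⟨A, B⟩ = tr(A* B)`. -/
noncomputable def traceOrthCompl {n : ℕ} (S : Set (Matrix (Fin n) (Fin n) ℂ)) :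
    Submodule ℂ (Matrix (Fin n) (Fin n) ℂ) where
  carrier := {X | ∀ A ∈ S, (Aᴴ * X).trace = 0}
  add_mem' := by
    intro a b ha hb A hA
    simp [Matrix.mul_add, ha A hA, hb A hA]
  zero_mem' := by intro A hA; simp
  smul_mem' := by
    intro c x hx A hA
    simp [Matrix.mul_smul, hx A hA]

/-- The commutant of a set of matrices, as a submodule of `M_n`. -/
noncomputable def commutantSub {n : ℕ} (S : Set (Matrix (Fin n) (Fin n) ℂ)) :
    Submodule ℂ (Matrix (Fin n) (Fin n) ℂ) where
  carrier := {X | ∀ A ∈ S, X * A = A * X}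
  add_mem' := by
    intro a b ha hb A hA
    simp [Matrix.mul_add, Matrix.add_mul, ha A hA, hb A hA]
  zero_mem' := by intro A hA; simp
  smul_mem' := by
    intro c x hx A hA
    simp [Matrix.mul_smul, Matrix.smul_mul, hx A hA]

/-- The multiplicative domain of a linear map on `M_n`, as a set. -/
noncomputable def multDomain {n m : ℕ}
    (Φ : Matrix (Fin n) (Fin n) ℂ →ₗ[ℂ] Matrix (Fin m) (Fin m) ℂ) :
    Set (Matrix (Fin n) (Fin n) ℂ) :=
  {A | ∀ X, Φ (A * X) = Φ A * Φ X ∧ Φ (X * A) = Φ X * Φ A}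

/-!
For a unital Kraus map `Φ(X) = ∑ᵢ Vᵢ X Vᵢ*`, the Schwarz defect is a sum of squares,
`Φ(A A*) - Φ(A) Φ(A)* = ∑ᵢ (Vᵢ A - Φ(A) Vᵢ)(Vᵢ A - Φ(A) Vᵢ)*`, so every `A ∈ M(Φ)` intertwines
the Kraus operators, `Vᵢ A = Φ(A) Vᵢ`, and therefore commutes with every `Vⱼ* Vᵢ`. As the entries
of `Φ^C(X)` are `tr(X Vⱼ* Vᵢ)`, this gives `Φ^C(A X) = Φ^C(X A)`; for `B ∈ M(Φ^C)` it follows that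
`Φ^C(A) Φ^C(B) = Φ^C(A B) = Φ^C(B A) = Φ^C(B) Φ^C(A)`.
-/

theorem Matrix.eq_zero_of_sum_mul_conjTranspose_self_eq_zero {R ι m n : Type*} [CommRing R]
    [PartialOrder R] [StarRing R] [StarOrderedRing R] [NoZeroDivisors R] [Fintype ι]
    [Fintype m] [Fintype n] {S : ι → Matrix m n R} (h : ∑ i, S i * (S i)ᴴ = 0) (i : ι) :
    S i = 0 := by
  have htrace : ∑ j, (S j * (S j)ᴴ).trace = 0 := by rw [← trace_sum, h, trace_zero]
  have hnonneg : ∀ j ∈ Finset.univ, 0 ≤ (S j * (S j)ᴴ).trace :=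
    fun j _ => (posSemidef_self_mul_conjTranspose (S j)).trace_nonneg
  exact trace_mul_conjTranspose_self_eq_zero_iff.mp <|
    (Finset.sum_eq_zero_iff_of_nonneg hnonneg).mp htrace i (Finset.mem_univ i)

section Kraus

variable {d n m : ℕ} (V : Fin d → Matrix (Fin m) (Fin n) ℂ)

theorem krausMap_conjTranspose (A : Matrix (Fin n) (Fin n) ℂ) :
    (krausMap V A)ᴴ = krausMap V Aᴴ := by
  simp [krausMap, conjTranspose_sum, conjTranspose_mul, Matrix.mul_assoc]

theorem sum_mul_conjTranspose_sub_krausMap (hV : ∑ i, V i * (V i)ᴴ = 1)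
    (A : Matrix (Fin n) (Fin n) ℂ) :
    ∑ i, (V i * A - krausMap V A * V i) * (V i * A - krausMap V A * V i)ᴴ =
      krausMap V (A * Aᴴ) - krausMap V A * krausMap V Aᴴ := by
  set B := krausMap V A
  have hB : Bᴴ = krausMap V Aᴴ := krausMap_conjTranspose V A
  have expand : ∀ i, (V i * A - B * V i) * (V i * A - B * V i)ᴴ =
      V i * (A * Aᴴ) * (V i)ᴴ - V i * A * (V i)ᴴ * Bᴴ - B * (V i * Aᴴ * (V i)ᴴ)
        + B * (V i * (V i)ᴴ) * Bᴴ := by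
    intro i
    simp only [conjTranspose_sub, conjTranspose_mul, Matrix.sub_mul, Matrix.mul_sub,
      Matrix.mul_assoc]
    abel
  simp only [expand, Finset.sum_add_distrib, Finset.sum_sub_distrib, ← Finset.sum_mul,
    ← Finset.mul_sum, hV]
  change krausMap V (A * Aᴴ) - B * Bᴴ - B * krausMap V Aᴴ + B * 1 * Bᴴ = _
  rw [hB]
  noncomm_ring

theorem mul_eq_krausMap_mul_of_schwarz_eq (hV : ∑ i, V i * (V i)ᴴ = 1)
    {A : Matrix (Fin n) (Fin n) ℂ} (hA : krausMap V (A * Aᴴ) = krausMap V A * krausMap V Aᴴ)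
    (i : Fin d) : V i * A = krausMap V A * V i :=
  sub_eq_zero.mp <| eq_zero_of_sum_mul_conjTranspose_self_eq_zero
    (by rw [sum_mul_conjTranspose_sub_krausMap V hV, hA, sub_self]) i

theorem commute_conjTranspose_mul_of_mem_multDomain (hV : ∑ i, V i * (V i)ᴴ = 1)
    {A : Matrix (Fin n) (Fin n) ℂ} (hA : A ∈ multDomain (krausMap V)) (i j : Fin d) :
    Commute A ((V j)ᴴ * V i) := by
  have hVA : V i * A = krausMap V A * V i :=
    mul_eq_krausMap_mul_of_schwarz_eq V hV (hA Aᴴ).1 i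
  have hVAH : V j * Aᴴ = krausMap V Aᴴ * V j :=
    mul_eq_krausMap_mul_of_schwarz_eq V hV (by simpa using (hA Aᴴ).2) j
  have hAVH : A * (V j)ᴴ = (V j)ᴴ * krausMap V A := by
    simpa [conjTranspose_mul, krausMap_conjTranspose] using congrArg conjTranspose hVAH
  calc A * ((V j)ᴴ * V i) = (V j)ᴴ * (krausMap V A * V i) := by
        rw [← Matrix.mul_assoc, hAVH, Matrix.mul_assoc]
    _ = (V j)ᴴ * V i * A := by rw [← hVA, Matrix.mul_assoc]

theorem complMap_mul_comm_of_mem_multDomain (hV : ∑ i, V i * (V i)ᴴ = 1)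
    {A : Matrix (Fin n) (Fin n) ℂ} (hA : A ∈ multDomain (krausMap V))
    (X : Matrix (Fin n) (Fin n) ℂ) : complMap V (A * X) = complMap V (X * A) := by
  ext i j
  change (A * X * ((V j)ᴴ * V i)).trace = (X * A * ((V j)ᴴ * V i)).trace
  rw [Matrix.mul_assoc X A, (commute_conjTranspose_mul_of_mem_multDomain V hV hA i j).eq,
    ← Matrix.mul_assoc X, trace_mul_comm (X * _) A, ← Matrix.mul_assoc A X]

end Kraus

theorem stmt_12_general {d n : ℕ} (V : Fin d → Matrix (Fin n) (Fin n) ℂ)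
    (hV' : ∑ i, V i * (V i)ᴴ = 1) :
    ∀ A ∈ multDomain (krausMap V), ∀ B ∈ multDomain (complMap V),
      complMap V A * complMap V B = complMap V B * complMap V A := by
  intro A hA B hB
  rw [← (hB A).2, ← (hB A).1, complMap_mul_comm_of_mem_multDomain V hV' hA B]

/-- for a unital channel `Φ`, every element of `Φ^C(M(Φ))` commutes
with every element of `Φ^C(M(Φ^C))`. -/
theorem stmt_12 {d n : ℕ} (V : Fin d → Matrix (Fin n) (Fin n) ℂ)
    (hV : ∑ i, (V i)ᴴ * V i = 1) (hV' : ∑ i, V i * (V i)ᴴ = 1) :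
    ∀ A ∈ multDomain (krausMap V), ∀ B ∈ multDomain (complMap V),
      complMap V A * complMap V B = complMap V B * complMap V A :=
  stmt_12_general V hV'
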